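/- For the standard normal distribution, for every μ ∈ (0, 1/2) the function y ↦ φ(Φ⁻¹(y)) / (y(1-y))^{1-μ} is bounded on (0,1). -/

import Mathlib

open Set Real MeasureTheory ProbabilityTheory

/-!
Put `x = Φ⁻¹(y)`. Both `y = Φ(x)` and `1 - y` dominate the Gaussian mass of a unit interval
adjacent to `x`, on which the density is at least `φ(|x| + 1)`; hence `y (1 - y) ≥ φ(|x| + 1) / 2`.
On the other hand `φ(x) ≤ C_μ φ(|x| + 1)^(1-μ)`, since `-x²/2 + (1 - μ)(|x| + 1)²/2` is a quadratic
in `|x|` with leading coefficient `-μ/2 < 0`, hence bounded above.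
-/

lemma gaussianPDFReal_zero_one (x : ℝ) :
    gaussianPDFReal 0 1 x = (√(2 * π))⁻¹ * exp (-x ^ 2 / 2) := by
  simp [gaussianPDFReal]

lemma gaussianPDFReal_zero_one_le_of_abs_le {s t : ℝ} (h : |s| ≤ |t|) :
    gaussianPDFReal 0 1 t ≤ gaussianPDFReal 0 1 s := by
  simp only [gaussianPDFReal_zero_one]
  have : s ^ 2 ≤ t ^ 2 := sq_le_sq.mpr h
  gcongr ?_ * exp ?_
  linarith

lemma le_setIntegral_Ioc_add_one {f : ℝ → ℝ} {a m : ℝ} (hf : IntegrableOn f (Ioc a (a + 1)))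
    (h : ∀ t ∈ Ioc a (a + 1), m ≤ f t) : m ≤ ∫ t in Ioc a (a + 1), f t := by
  simpa using setIntegral_ge_of_const_le_real measurableSet_Ioc (by simp) h hf

lemma gaussianPDFReal_zero_one_le_setIntegral_Ioc {x a : ℝ} (ha : x - 1 ≤ a) (ha' : a ≤ x) :
    gaussianPDFReal 0 1 (|x| + 1) ≤ ∫ t in Ioc a (a + 1), gaussianPDFReal 0 1 t := by
  refine le_setIntegral_Ioc_add_one (integrable_gaussianPDFReal 0 1).integrableOn
    fun t ht => gaussianPDFReal_zero_one_le_of_abs_le ?_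
  rw [abs_of_nonneg (by positivity : 0 ≤ |x| + 1), abs_le]
  obtain ⟨ht₁, ht₂⟩ := ht
  constructor <;> linarith [neg_abs_le x, le_abs_self x]

lemma gaussianPDFReal_zero_one_le_integral_Iic (x : ℝ) :
    gaussianPDFReal 0 1 (|x| + 1) ≤ ∫ t in Iic x, gaussianPDFReal 0 1 t := by
  calc _ ≤ ∫ t in Ioc (x - 1) (x - 1 + 1), gaussianPDFReal 0 1 t :=
        gaussianPDFReal_zero_one_le_setIntegral_Ioc le_rfl (by linarith)
    _ ≤ _ := setIntegral_mono_set (integrable_gaussianPDFReal 0 1).integrableOn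
        (.of_forall fun t => gaussianPDFReal_nonneg 0 1 t)
        (.of_forall fun t ht => by simp only [sub_add_cancel] at ht; exact ht.2)

lemma gaussianPDFReal_zero_one_le_one_sub_integral_Iic (x : ℝ) :
    gaussianPDFReal 0 1 (|x| + 1) ≤ 1 - ∫ t in Iic x, gaussianPDFReal 0 1 t := by
  have hint := integrable_gaussianPDFReal 0 1
  have htotal := intervalIntegral.integral_Iic_add_Ioi hint.integrableOn hint.integrableOn (b := x)
  rw [integral_gaussianPDFReal_eq_one 0 one_ne_zero] at htotal
  suffices gaussianPDFReal 0 1 (|x| + 1) ≤ ∫ t in Ioi x, gaussianPDFReal 0 1 t by linarith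
  calc _ ≤ ∫ t in Ioc x (x + 1), gaussianPDFReal 0 1 t :=
        gaussianPDFReal_zero_one_le_setIntegral_Ioc (by linarith) le_rfl
    _ ≤ _ := setIntegral_mono_set hint.integrableOn
        (.of_forall fun t => gaussianPDFReal_nonneg 0 1 t)
        (.of_forall fun t ht => ht.1)

lemma half_le_mul_one_sub_of_le_of_le {L y : ℝ} (hL : 0 ≤ L) (hy : L ≤ y) (hy' : L ≤ 1 - y) :
    L / 2 ≤ y * (1 - y) := by
  rcases le_total y (1 / 2) with h | h <;> nlinarith

lemma neg_sq_div_two_le {μ : ℝ} (hμ : 0 < μ) (t : ℝ) :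
    -t ^ 2 / 2 ≤ (1 - μ) / (2 * μ) + (1 - μ) * (-(t + 1) ^ 2 / 2) := by
  have key : (1 - μ) / (2 * μ) + (1 - μ) * (-(t + 1) ^ 2 / 2) - (-t ^ 2 / 2)
      = (μ * t - (1 - μ)) ^ 2 / (2 * μ) := by
    field_simp
    ring
  linarith [show 0 ≤ (μ * t - (1 - μ)) ^ 2 / (2 * μ) by positivity]

lemma exists_gaussianPDFReal_zero_one_le_mul_rpow {μ : ℝ} (hμ : 0 < μ) : ∃ M, ∀ x,
    gaussianPDFReal 0 1 x ≤ M * (gaussianPDFReal 0 1 (|x| + 1) / 2) ^ (1 - μ) := by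
  set c := (√(2 * π))⁻¹
  refine ⟨c * (c / 2) ^ (-(1 - μ)) * exp ((1 - μ) / (2 * μ)), fun x => ?_⟩
  have hc : 0 < c / 2 := by positivity
  have hsplit : gaussianPDFReal 0 1 (|x| + 1) / 2 = c / 2 * exp (-(|x| + 1) ^ 2 / 2) := by
    rw [gaussianPDFReal_zero_one]; ring
  rw [hsplit, mul_rpow hc.le (exp_pos _).le, ← exp_mul, gaussianPDFReal_zero_one]
  calc c * exp (-x ^ 2 / 2)
      ≤ c * exp ((1 - μ) / (2 * μ) + (1 - μ) * (-(|x| + 1) ^ 2 / 2)) := by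
        gcongr
        simpa only [sq_abs] using neg_sq_div_two_le hμ |x|
    _ = _ := by
        rw [exp_add, rpow_neg hc.le]
        field_simp

theorem stmt3_general (φ Φ Φinv : ℝ → ℝ)
    (hφ : ∀ x, φ x = (Real.sqrt (2 * π))⁻¹ * Real.exp (-x ^ 2 / 2))
    (hΦ : ∀ x, Φ x = ∫ t in Iic x, φ t)
    (hinv : ∀ y ∈ Ioo (0:ℝ) 1, Φ (Φinv y) = y) :
    ∀ μ ∈ Ioo (0:ℝ) (1/2), ∃ M : ℝ,
      ∀ y ∈ Ioo (0:ℝ) 1, φ (Φinv y) / (y * (1 - y)) ^ (1 - μ) ≤ M := by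
  obtain rfl : φ = gaussianPDFReal 0 1 := funext fun x => by rw [hφ, gaussianPDFReal_zero_one]
  rintro μ ⟨hμ, hμ'⟩
  obtain ⟨M, hM⟩ := exists_gaussianPDFReal_zero_one_le_mul_rpow hμ
  refine ⟨M, fun y hy => ?_⟩
  set x := Φinv y
  have hx : ∫ t in Iic x, gaussianPDFReal 0 1 t = y := (hΦ x).symm.trans (hinv y hy)
  set L := gaussianPDFReal 0 1 (|x| + 1)
  have hL : 0 < L / 2 := half_pos (gaussianPDFReal_pos 0 1 _ one_ne_zero)
  have hLy : L / 2 ≤ y * (1 - y) := half_le_mul_one_sub_of_le_of_le (gaussianPDFReal_nonneg 0 1 _)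
    (hx ▸ gaussianPDFReal_zero_one_le_integral_Iic x)
    (hx ▸ gaussianPDFReal_zero_one_le_one_sub_integral_Iic x)
  calc gaussianPDFReal 0 1 x / (y * (1 - y)) ^ (1 - μ)
      ≤ gaussianPDFReal 0 1 x / (L / 2) ^ (1 - μ) := by
        gcongr
        · exact gaussianPDFReal_nonneg 0 1 x
        · linarith
    _ ≤ _ := by
        rw [div_le_iff₀ (by positivity)]
        exact hM x

/-- For the standard normal, for every `μ ∈ (0,1/2)` the function
`y ↦ φ(Φ⁻¹(y)) / (y(1-y))^(1-μ)` is bounded on `(0,1)`. -/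
theorem stmt3 (φ Φ Φinv : ℝ → ℝ)
    (hφ : ∀ x, φ x = (Real.sqrt (2 * π))⁻¹ * Real.exp (-x ^ 2 / 2))
    (hΦ : ∀ x, Φ x = ∫ t in Iic x, φ t)
    (hinv : ∀ y ∈ Ioo (0:ℝ) 1, Φ (Φinv y) = y)
    (hinv' : ∀ x, Φinv (Φ x) = x) :
    ∀ μ ∈ Ioo (0:ℝ) (1/2), ∃ M : ℝ,
      ∀ y ∈ Ioo (0:ℝ) 1, φ (Φinv y) / (y * (1 - y)) ^ (1 - μ) ≤ M :=
  stmt3_general φ Φ Φinv hφ hΦ hinv
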